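/- arXiv:1712.00279 — 2 statements merged into one kernel-verified Lean document; each statement's English description precedes it below -/
import Mathlib

section
/- Let n ≥ N ≥ 1 be integers and let i_1, …, i_N ∈ ℕ satisfy i_1 + ⋯ + i_N = n. Then | ln( n! / (i_1! ⋯ i_N!) ) + Σ_{k=1}^{N} i_k ln(i_k/n) | ≤ N ln n + 2N. -/
/-!
Write `log m! = m log m - m + R m`. Then `0 ≤ R m ≤ (log m) / 2 + 1`: the lower bound is
`m^m / m! ≤ e^m`, the upper bound is the monotonicity of the Stirling sequence. Because
`∑ i_k = n`, the quantity to estimate is exactly `R n - ∑ R i_k`, a difference of two numbers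
in `[0, N (log n / 2 + 1)]`.
-/

open Real Finset

open scoped Nat

noncomputable def logFactorialRemainder (m : ℕ) : ℝ :=
  log m ! - (m * log m - m)

lemma logFactorialRemainder_nonneg (m : ℕ) : 0 ≤ logFactorialRemainder m := by
  rcases Nat.eq_zero_or_pos m with rfl | hm
  · simp [logFactorialRemainder]
  have hpow : 0 < (m : ℝ) ^ m / m ! := by positivity
  have h := log_le_log hpow (pow_div_factorial_le_exp (m : ℝ) m.cast_nonneg m)
  rw [log_div (by positivity) (by positivity), log_pow, log_exp] at h
  unfold logFactorialRemainder
  linarith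

lemma logFactorialRemainder_le (m : ℕ) : logFactorialRemainder m ≤ log m / 2 + 1 := by
  rcases m with _ | k
  · simp [logFactorialRemainder]
  have hmono : log (Stirling.stirlingSeq (k + 1)) ≤ log (Stirling.stirlingSeq 1) :=
    Stirling.log_stirlingSeq'_antitone (Nat.zero_le k)
  rw [Stirling.stirlingSeq_one, log_div (exp_pos 1).ne' (by positivity), log_exp,
    Stirling.log_stirlingSeq_formula, log_mul two_ne_zero (by positivity),
    log_div (by positivity) (exp_pos 1).ne', log_exp, log_sqrt zero_le_two] at hmono
  unfold logFactorialRemainder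
  linarith

lemma log_div_prod_factorial_add_sum_mul_log_div {ι : Type*} (s : Finset ι) (i : ι → ℕ)
    {n : ℕ} (hsum : ∑ k ∈ s, i k = n) :
    log ((n ! : ℝ) / ∏ k ∈ s, ((i k)! : ℝ)) + ∑ k ∈ s, (i k : ℝ) * log ((i k : ℝ) / n) =
      logFactorialRemainder n - ∑ k ∈ s, logFactorialRemainder (i k) := by
  have hsum' : ∑ k ∈ s, (i k : ℝ) = n := by exact_mod_cast hsum
  have hlog_prod : log (∏ k ∈ s, ((i k)! : ℝ)) = ∑ k ∈ s, log ((i k)! : ℝ) :=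
    log_prod fun k _ => by positivity
  have hmul_log_div : ∀ k ∈ s, (i k : ℝ) * log ((i k : ℝ) / n) =
      (i k : ℝ) * log (i k) - (i k : ℝ) * log n := by
    intro k hk
    rcases Nat.eq_zero_or_pos (i k) with h | h
    · simp [h]
    have hn : (n : ℝ) ≠ 0 := by
      have : i k ≤ n := hsum ▸ single_le_sum (fun _ _ => Nat.zero_le _) hk
      exact_mod_cast (h.trans_le this).ne'
    rw [log_div (by positivity) hn]
    ring
  rw [log_div (by positivity) (prod_pos fun k _ => by positivity).ne', hlog_prod,
    sum_congr rfl hmul_log_div, sum_sub_distrib, ← sum_mul, hsum']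
  simp only [logFactorialRemainder, sum_sub_distrib, hsum']
  ring

lemma sum_logFactorialRemainder_le {ι : Type*} (s : Finset ι) (i : ι → ℕ) {n : ℕ}
    (hsum : ∑ k ∈ s, i k = n) :
    ∑ k ∈ s, logFactorialRemainder (i k) ≤ #s * (log n / 2 + 1) := by
  rw [← nsmul_eq_mul, ← sum_const]
  refine sum_le_sum fun k hk => (logFactorialRemainder_le (i k)).trans ?_
  have hlog : log (i k) ≤ log n := by
    rcases Nat.eq_zero_or_pos (i k) with h | h
    · simpa [h] using log_natCast_nonneg n
    exact log_le_log (by positivity)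
      (by exact_mod_cast hsum ▸ single_le_sum (fun _ _ => Nat.zero_le _) hk)
  linarith

theorem multinomial_log_estimate_general (n N : ℕ) (hN : 1 ≤ N)
    (i : Fin N → ℕ) (hsum : ∑ k, i k = n) :
    |Real.log ((n.factorial : ℝ) / ∏ k, ((i k).factorial : ℝ)) +
        ∑ k, (i k : ℝ) * Real.log ((i k : ℝ) / (n : ℝ))| ≤
      (N : ℝ) * Real.log n + 2 * N := by
  have hbound : 0 ≤ log n / 2 + 1 := by linarith [log_natCast_nonneg n]
  have hR_le : logFactorialRemainder n ≤ N * (log n / 2 + 1) :=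
    (logFactorialRemainder_le n).trans (le_mul_of_one_le_left hbound (by exact_mod_cast hN))
  have hsum_le := sum_logFactorialRemainder_le univ i hsum
  rw [card_univ, Fintype.card_fin] at hsum_le
  rw [log_div_prod_factorial_add_sum_mul_log_div univ i hsum]
  calc _ ≤ N * (log n / 2 + 1) - 0 :=
        abs_sub_le_of_le_of_le (logFactorialRemainder_nonneg n) hR_le
          (sum_nonneg fun k _ => logFactorialRemainder_nonneg (i k)) hsum_le
    _ ≤ N * log n + 2 * N := by nlinarith [log_natCast_nonneg n]

/-- **Multinomial coefficient estimate.**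
Let `n ≥ N ≥ 1` be integers and let `i_1, …, i_N ∈ ℕ` satisfy `i_1 + ⋯ + i_N = n`. Then
`| ln( n! / (i_1! ⋯ i_N!) ) + Σ_{k=1}^{N} i_k ln(i_k/n) | ≤ N ln n + 2N`.
(The convention `0 ln 0 = 0` is automatic here, since `(0 : ℝ) * Real.log (0 / n) = 0`.) -/
theorem multinomial_log_estimate (n N : ℕ) (hN : 1 ≤ N) (hn : N ≤ n)
    (i : Fin N → ℕ) (hsum : ∑ k, i k = n) :
    |Real.log ((n.factorial : ℝ) / ∏ k, ((i k).factorial : ℝ)) +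
        ∑ k, (i k : ℝ) * Real.log ((i k : ℝ) / (n : ℝ))| ≤
      (N : ℝ) * Real.log n + 2 * N :=
  multinomial_log_estimate_general n N hN i hsum
end

section
/- Asymptotically (for ℓ, m large enough, q small enough, ℓq close enough to a and m/ℓ close enough to α), for any integer k ≥ 0, any ε > 0 and any d ∈ 𝒩_k: E( τ*_k | D_0 = d ) ≤ κ^{ℓ(1+ε)}. -/
open scoped BigOperators Classical
open Filter

noncomputable section

/-- Probability mass function of the binomial distribution. -/
def binomPMF (n : ℕ) (p : ℝ) (k : ℕ) : ℝ :=
  (n.choose k : ℝ) * p ^ k * (1 - p) ^ (n - k)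

/-- Lumped mutation matrix `M(i,j) = P(i - X + Y = j)` where `X ~ Bin(i, q/(κ-1))`
and `Y ~ Bin(ℓ-i, q)` are independent. -/
def Mmut (κ ℓ : ℕ) (q : ℝ) (i j : ℕ) : ℝ :=
  ∑ x ∈ Finset.range (i + 1), ∑ y ∈ Finset.range (ℓ - i + 1),
    (if i + y = j + x then binomPMF i (q / ((κ : ℝ) - 1)) x * binomPMF (ℓ - i) q y else 0)

/-- Occupancy states: ordered partitions of `m` in at most `ℓ+1` parts. -/
abbrev Occ (ℓ m : ℕ) : Type := {o : Fin (ℓ + 1) → Fin (m + 1) // ∑ h, (o h : ℕ) = m}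

/-- Total fitness of a population. -/
def fitSum (A : ℕ → ℝ) {ℓ m : ℕ} (o : Occ ℓ m) : ℝ :=
  ∑ j : Fin (ℓ + 1), ((o.1 j : ℕ) : ℝ) * A (j : ℕ)

/-- Transition matrix of the occupancy process (Wright--Fisher). -/
def transP (κ : ℕ) (q : ℝ) (A : ℕ → ℝ) {ℓ m : ℕ} (o o' : Occ ℓ m) : ℝ :=
  ((m.factorial : ℝ) / ∏ h : Fin (ℓ + 1), (((o'.1 h : ℕ)).factorial : ℝ)) *
    ∏ h : Fin (ℓ + 1), ((∑ k : Fin (ℓ + 1), ((o.1 k : ℕ) : ℝ) * A (k : ℕ) * Mmut κ ℓ q (k : ℕ) (h : ℕ)) / fitSum A o)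
      ^ ((o'.1 h : ℕ))

/-- `n`-step transition probabilities of the occupancy process. -/
def nstep (κ : ℕ) (q : ℝ) (A : ℕ → ℝ) {ℓ m : ℕ} : ℕ → Occ ℓ m → Occ ℓ m → ℝ
  | 0, o, o' => if o = o' then 1 else 0
  | n + 1, o, o' => ∑ u : Occ ℓ m, nstep κ q A n o u * transP κ q A u o'

/-- Projection keeping the first `K+1` coordinates. -/
def projK (K : ℕ) {ℓ m : ℕ} (o : Occ ℓ m) : Fin (K + 1) → ℕ :=
  fun i => if h : (i : ℕ) < ℓ + 1 then (o.1 ⟨(i : ℕ), h⟩ : ℕ) else 0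

/-- Normalized projection `π_K(o)/m`. -/
def scaled (K : ℕ) {ℓ m : ℕ} (o : Occ ℓ m) : Fin (K + 1) → ℝ :=
  fun i => (projK K o i : ℝ) / (m : ℝ)

/-- `P(Z_l ∈ S | O_0 = o)`. -/
def probZin (κ : ℕ) (q : ℝ) (A : ℕ → ℝ) (K : ℕ) {ℓ m : ℕ} (l : ℕ) (o : Occ ℓ m)
    (S : Set (Fin (K + 1) → ℕ)) : ℝ :=
  ∑ o' : Occ ℓ m, (if projK K o' ∈ S then nstep κ q A l o o' else 0)

/-- `P(Z_t ∈ S for all 1 ≤ t ≤ n | O_0 = o)`. -/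
def stayNext (κ : ℕ) (q : ℝ) (A : ℕ → ℝ) (K : ℕ) {ℓ m : ℕ} (S : Set (Fin (K + 1) → ℕ)) :
    ℕ → Occ ℓ m → ℝ
  | 0, _ => 1
  | n + 1, o => ∑ o' : Occ ℓ m, transP κ q A o o' *
      (if projK K o' ∈ S then stayNext κ q A K S n o' else 0)

/-- `P(Z_t ∈ S for all 0 ≤ t ≤ n | O_0 = o)`. -/
def stayAll (κ : ℕ) (q : ℝ) (A : ℕ → ℝ) (K : ℕ) {ℓ m : ℕ} (S : Set (Fin (K + 1) → ℕ))
    (n : ℕ) (o : Occ ℓ m) : ℝ :=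
  if projK K o ∈ S then stayNext κ q A K S n o else 0

/-- Expected hitting time of `{Z = 0}`: `E(τ_0) = ∑_{n ≥ 0} P(τ_0 > n)`. -/
def hitZeroExp (κ : ℕ) (q : ℝ) (A : ℕ → ℝ) (K : ℕ) {ℓ m : ℕ} (o : Occ ℓ m) : ℝ :=
  ∑' n : ℕ, stayAll κ q A K {z | z ≠ 0} n o

/-- Extended-real logarithm, with `log x = -∞` for `x ≤ 0`. -/
def elog (x : ℝ) : EReal := if x ≤ 0 then ⊥ else ((Real.log x : ℝ) : EReal)

/-- ℓ¹ distance on `ℝ^{K+1}`. -/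
def l1dist {n : ℕ} (x y : Fin n → ℝ) : ℝ := ∑ i, |x i - y i|

/-- The simplex `𝒟`. -/
def simplexD (K : ℕ) : Set (Fin (K + 1) → ℝ) := {r | (∀ i, 0 ≤ r i) ∧ ∑ i, r i ≤ 1}

/-- Mean fitness `φ`. -/
def phiFn (K : ℕ) (A : ℕ → ℝ) (r : Fin (K + 1) → ℝ) : ℝ := 1 + ∑ h, r h * (A (h : ℕ) - 1)

/-- The limit map `G`. -/
def Gmap (K : ℕ) (A : ℕ → ℝ) (a : ℝ) (r : Fin (K + 1) → ℝ) : Fin (K + 1) → ℝ :=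
  fun i => (phiFn K A r)⁻¹ *
    ∑ h : Fin (K + 1), (if (h : ℕ) ≤ (i : ℕ) then
        r h * A (h : ℕ) * a ^ ((i : ℕ) - (h : ℕ)) / (((i : ℕ) - (h : ℕ)).factorial : ℝ)
      else 0)

/-- Term `t ln(t/p)` of the relative entropy, with conventions `0 ln 0 = 0 ln (0/0) = 0`
and value `∞` when `t > 0` and `p = 0`. -/
def klTerm (p t : ℝ) : EReal :=
  if t = 0 then 0 else if p = 0 then ⊤ else ((t * Real.log (t / p) : ℝ) : EReal)

/-- The rate function `I_K(p, t)`. -/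
def IkFn (K : ℕ) (p t : Fin (K + 1) → ℝ) : EReal :=
  (∑ k, klTerm (p k) (t k)) + klTerm (1 - ∑ k, p k) (1 - ∑ k, t k)

/-- `V_1(r,t) = I_K(G(r), t)`. -/
def V1 (K : ℕ) (A : ℕ → ℝ) (a : ℝ) (r t : Fin (K + 1) → ℝ) : EReal :=
  IkFn K (Gmap K A a r) t

/-- `V_l(r,t)`, the `l`-step rate function. -/
def Vl (K : ℕ) (A : ℕ → ℝ) (a : ℝ) (l : ℕ) (r t : Fin (K + 1) → ℝ) : EReal :=
  if l = 1 then V1 K A a r t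
  else ⨅ s : {s : ℕ → Fin (K + 1) → ℝ // s 0 = r ∧ s l = t ∧ ∀ k ≤ l, s k ∈ simplexD K},
    ∑ k ∈ Finset.range l, V1 K A a (s.1 k) (s.1 (k + 1))

/-- `V(r,t) = inf_{l ≥ 1} V_l(r,t)`. -/
def Vmin (K : ℕ) (A : ℕ → ℝ) (a : ℝ) (r t : Fin (K + 1) → ℝ) : EReal :=
  ⨅ l : ℕ, Vl K A a (l + 1) r t

/-- The index set `I_A`. -/
def idxSet (K : ℕ) (A : ℕ → ℝ) (a : ℝ) : Set ℕ :=
  {b | b ≤ K ∧ 1 < A b * Real.exp (-a) ∧ ∀ j, b < j → A j < A b} ∪ {K + 1}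

/-- Standing hypotheses on the fitness function. -/
def fitOK (K : ℕ) (A : ℕ → ℝ) : Prop :=
  (∀ k, 0 < A k) ∧ (∀ k, 1 ≤ k → A k < A 0) ∧ A K ≠ 1 ∧ ∀ k, K + 1 ≤ k → A k = 1

/-- `ρ` is the unique fixed point of `G` with positive first coordinate. -/
def isRho0 (K : ℕ) (A : ℕ → ℝ) (a : ℝ) (ρ : Fin (K + 1) → ℝ) : Prop :=
  ρ ∈ simplexD K ∧ Gmap K A a ρ = ρ ∧ 0 < ρ 0 ∧
    ∀ r ∈ simplexD K, Gmap K A a r = r → 0 < r 0 → r = ρ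

/-- The asymptotic regime `ℓ, m → ∞`, `q → 0`, `ℓq → a`, encoded by sequences. -/
structure RegimeSeq (a : ℝ) (ℓs ms : ℕ → ℕ) (qs : ℕ → ℝ) : Prop where
  hl : Tendsto ℓs atTop atTop
  hm : Tendsto ms atTop atTop
  hq01 : ∀ n, 0 < qs n ∧ qs n < 1
  hq : Tendsto qs atTop (nhds 0)
  hlq : Tendsto (fun n => (ℓs n : ℝ) * qs n) atTop (nhds a)

/-- The asymptotic regime with, in addition, `m/ℓ → α`. -/
structure RegimeSeqα (a α : ℝ) (ℓs ms : ℕ → ℕ) (qs : ℕ → ℝ)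
    extends RegimeSeq a ℓs ms qs : Prop where
  hml : Tendsto (fun n => (ms n : ℝ) / (ℓs n : ℝ)) atTop (nhds α)

/-- "Asymptotically": for `ℓ, m` large enough, `q` small enough, `ℓq` close enough to `a`. -/
def Asymp (a : ℝ) (P : ℕ → ℕ → ℝ → Prop) : Prop :=
  ∃ ε > (0 : ℝ), ∃ N : ℕ, ∀ ℓ m : ℕ, ∀ q : ℝ,
    N ≤ ℓ → N ≤ m → 0 < q → q < ε → |(ℓ : ℝ) * q - a| < ε → P ℓ m q

/-- "Asymptotically", with in addition `m/ℓ` close enough to `α`. -/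
def Asympα (a α : ℝ) (P : ℕ → ℕ → ℝ → Prop) : Prop :=
  ∃ ε > (0 : ℝ), ∃ N : ℕ, ∀ ℓ m : ℕ, ∀ q : ℝ,
    N ≤ ℓ → N ≤ m → 0 < q → q < ε → |(ℓ : ℝ) * q - a| < ε →
      |(m : ℝ) / (ℓ : ℝ) - α| < ε → P ℓ m q

/-- Relative interior of `U` in `𝒟`. -/
def relInterior (K : ℕ) (U : Set (Fin (K + 1) → ℝ)) : Set (Fin (K + 1) → ℝ) :=
  {t | t ∈ simplexD K ∧ ∃ V, IsOpen V ∧ t ∈ V ∧ V ∩ simplexD K ⊆ U}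

/-- Invariant probability measure of the occupancy process. -/
def invariantProb (κ : ℕ) (q : ℝ) (A : ℕ → ℝ) {ℓ m : ℕ} (μ : Occ ℓ m → ℝ) : Prop :=
  (∀ o, 0 ≤ μ o) ∧ (∑ o, μ o = 1) ∧ ∀ o', ∑ o, μ o * transP κ q A o o' = μ o'

/-- `P(D_t ∈ S for all 0 ≤ t ≤ n | D_0 = d)` for the neutral distance process. -/
def stayD (κ ℓ m : ℕ) (q : ℝ) (S : Set (Fin m → Fin (ℓ + 1))) :
    ℕ → (Fin m → Fin (ℓ + 1)) → ℝ
  | 0, d => if d ∈ S then 1 else 0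
  | n + 1, d => if d ∈ S then
      ∑ e : Fin m → Fin (ℓ + 1),
        (∏ i : Fin m, ((1 / (m : ℝ)) * ∑ j : Fin m, Mmut κ ℓ q (d j : ℕ) (e i : ℕ))) *
          stayD κ ℓ m q S n e
    else 0

/-! Along one lineage every site performs the symmetric mutation chain on `κ` letters, whose
nontrivial eigenvalue is `λ = 1 - qκ/(κ-1)`. So a genome at distance `i` from the master sequence
is mutated into it within `n` generations with probability `a_n^(ℓ-i) r_n^i`, where `a_n ≥ r_n`
are the one-site probabilities of ending on the master letter. Averaged over the population this
quantity is harmonic for the neutral kernel, and one minus it bounds the probability of staying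
in `𝒩_k` for `n` steps. After `T = Cℓ` generations `λ^T ≤ 1 - κ^(-ε/2)`, so from any population
the master sequence is found within the next `T` steps with probability at least
`r_T^ℓ ≥ κ^(-ℓ(1+ε/2))`; hence `E(τ*_k) ≤ T κ^(ℓ(1+ε/2)) ≤ κ^(ℓ(1+ε))` once `Cℓ ≤ κ^(εℓ/2)`. -/

open Finset

variable {κ ℓ m : ℕ} {q : ℝ}

lemma binomPMF_nonneg {p : ℝ} (h0 : 0 ≤ p) (h1 : p ≤ 1) (n k : ℕ) : 0 ≤ binomPMF n p k := by
  have : 0 ≤ 1 - p := by linarith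
  unfold binomPMF
  positivity

lemma sum_binomPMF_mul_pow_mul_pow (n : ℕ) (p s w : ℝ) :
    ∑ x ∈ range (n + 1), binomPMF n p x * (s ^ x * w ^ (n - x)) = (p * s + (1 - p) * w) ^ n := by
  rw [add_pow]
  refine sum_congr rfl fun x _ => ?_
  unfold binomPMF
  rw [mul_pow, mul_pow]
  ring

lemma Mmut_nonneg (hκ : 2 ≤ κ) (h0 : 0 ≤ q) (h1 : q ≤ 1) (i j : ℕ) : 0 ≤ Mmut κ ℓ q i j := by
  have hκ1 : (1 : ℝ) ≤ κ - 1 := by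
    have : (2 : ℝ) ≤ κ := by exact_mod_cast hκ
    linarith
  have hp0 : 0 ≤ q / ((κ : ℝ) - 1) := div_nonneg h0 (by linarith)
  have hp1 : q / ((κ : ℝ) - 1) ≤ 1 := div_le_one_of_le₀ (h1.trans hκ1) (by linarith)
  unfold Mmut
  refine sum_nonneg fun x _ => sum_nonneg fun y _ => ?_
  split_ifs
  · exact mul_nonneg (binomPMF_nonneg hp0 hp1 _ _) (binomPMF_nonneg h0 h1 _ _)
  · rfl

lemma sum_range_Mmut_mul {i : ℕ} (hi : i ≤ ℓ) (f : ℕ → ℝ) :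
    ∑ j ∈ range (ℓ + 1), Mmut κ ℓ q i j * f j =
      ∑ x ∈ range (i + 1), ∑ y ∈ range (ℓ - i + 1),
        binomPMF i (q / ((κ : ℝ) - 1)) x * binomPMF (ℓ - i) q y * f (i + y - x) := by
  unfold Mmut
  simp only [sum_mul, ite_mul, zero_mul]
  rw [sum_comm]
  refine sum_congr rfl fun x hx => ?_
  rw [sum_comm]
  refine sum_congr rfl fun y hy => ?_
  simp only [mem_range] at hx hy
  have hj : ∀ j, i + y = j + x ↔ j = i + y - x := fun j => by omega
  simp only [hj, sum_ite_eq', mem_range]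
  rw [if_pos (by omega)]

/-- If a genome at distance `i` from the master sequence mutates, `i - X` of its wrong sites stay
wrong and `Y` of its right sites become wrong, independently; so weights `s` per right site and
`w` per wrong site factor over the sites. -/
lemma sum_Mmut_mul_pow_mul_pow {i : ℕ} (hi : i ≤ ℓ) (s w : ℝ) :
    ∑ j : Fin (ℓ + 1), Mmut κ ℓ q i j * (s ^ (ℓ - j) * w ^ (j : ℕ)) =
      (q / (κ - 1) * s + (1 - q / (κ - 1)) * w) ^ i * (q * w + (1 - q) * s) ^ (ℓ - i) := by
  rw [Fin.sum_univ_eq_sum_range (fun j => Mmut κ ℓ q i j * (s ^ (ℓ - j) * w ^ j)),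
    sum_range_Mmut_mul hi, ← sum_binomPMF_mul_pow_mul_pow, ← sum_binomPMF_mul_pow_mul_pow,
    sum_mul_sum]
  refine sum_congr rfl fun x hx => sum_congr rfl fun y hy => ?_
  simp only [mem_range] at hx hy
  rw [show ℓ - (i + y - x) = (ℓ - i - y) + x by omega, show i + y - x = (i - x) + y by omega,
    pow_add, pow_add]
  ring

lemma sum_Mmut {i : ℕ} (hi : i ≤ ℓ) : ∑ j : Fin (ℓ + 1), Mmut κ ℓ q i j = 1 := by
  simpa using sum_Mmut_mul_pow_mul_pow (κ := κ) (q := q) hi 1 1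

/- A single site mutates to each of the other `κ - 1` letters with probability `q / (κ - 1)`.
Its probability to carry the master letter after `n` steps is `agreeProb κ q n` if it carries it
now and `repairProb κ q n` otherwise; `mutEigen κ q` is the nontrivial eigenvalue of this chain. -/

def mutEigen (κ : ℕ) (q : ℝ) : ℝ := 1 - q * κ / (κ - 1)

def agreeProb (κ : ℕ) (q : ℝ) (n : ℕ) : ℝ := 1 / κ + (1 - 1 / κ) * mutEigen κ q ^ n

def repairProb (κ : ℕ) (q : ℝ) (n : ℕ) : ℝ := (1 - mutEigen κ q ^ n) / κ

lemma agreeProb_succ (hκ : 2 ≤ κ) (n : ℕ) :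
    agreeProb κ q (n + 1) = q * repairProb κ q n + (1 - q) * agreeProb κ q n := by
  have : (2 : ℝ) ≤ κ := by exact_mod_cast hκ
  have : (κ : ℝ) - 1 ≠ 0 := by linarith
  unfold agreeProb repairProb
  rw [pow_succ]
  generalize mutEigen κ q ^ n = L
  unfold mutEigen
  field_simp
  ring

lemma repairProb_succ (hκ : 2 ≤ κ) (n : ℕ) :
    repairProb κ q (n + 1) =
      q / (κ - 1) * agreeProb κ q n + (1 - q / (κ - 1)) * repairProb κ q n := by
  have : (2 : ℝ) ≤ κ := by exact_mod_cast hκ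
  have : (κ : ℝ) - 1 ≠ 0 := by linarith
  unfold agreeProb repairProb
  rw [pow_succ]
  generalize mutEigen κ q ^ n = L
  unfold mutEigen
  field_simp
  ring

lemma mutEigen_nonneg (hκ : 2 ≤ κ) (hq : q ≤ 1 / 2) : 0 ≤ mutEigen κ q := by
  have : (2 : ℝ) ≤ κ := by exact_mod_cast hκ
  have : q * κ / (κ - 1) ≤ 1 := by rw [div_le_one (by linarith)]; nlinarith
  unfold mutEigen
  linarith

lemma mutEigen_le (hκ : 2 ≤ κ) (hq0 : 0 ≤ q) : mutEigen κ q ≤ 1 - q := by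
  have : (2 : ℝ) ≤ κ := by exact_mod_cast hκ
  have : q ≤ q * κ / (κ - 1) := by rw [le_div_iff₀ (by linarith)]; nlinarith
  unfold mutEigen
  linarith

lemma repairProb_pos (hκ : 2 ≤ κ) (hq0 : 0 < q) (hq : q ≤ 1 / 2) {n : ℕ} (hn : n ≠ 0) :
    0 < repairProb κ q n := by
  have hL0 := mutEigen_nonneg hκ hq
  have hL1 : mutEigen κ q < 1 := (mutEigen_le hκ hq0.le).trans_lt (by linarith)
  have : (0 : ℝ) < κ := by positivity
  exact div_pos (by linarith [pow_lt_one₀ hL0 hL1 hn]) this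

lemma mutEigen_pow_le_one (hκ : 2 ≤ κ) (hq0 : 0 ≤ q) (hq : q ≤ 1 / 2) (n : ℕ) :
    mutEigen κ q ^ n ≤ 1 :=
  pow_le_one₀ (mutEigen_nonneg hκ hq) ((mutEigen_le hκ hq0).trans (by linarith))

lemma repairProb_nonneg (hκ : 2 ≤ κ) (hq0 : 0 ≤ q) (hq : q ≤ 1 / 2) (n : ℕ) :
    0 ≤ repairProb κ q n :=
  div_nonneg (by linarith [mutEigen_pow_le_one hκ hq0 hq n]) (Nat.cast_nonneg κ)

lemma repairProb_le_agreeProb (hκ : 2 ≤ κ) (hq : q ≤ 1 / 2) (n : ℕ) :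
    repairProb κ q n ≤ agreeProb κ q n := by
  have : (0 : ℝ) < κ := by positivity
  have : agreeProb κ q n - repairProb κ q n = mutEigen κ q ^ n := by
    unfold agreeProb repairProb; field_simp; ring
  linarith [pow_nonneg (mutEigen_nonneg hκ hq) n]

lemma agreeProb_le_one (hκ : 2 ≤ κ) (hq0 : 0 ≤ q) (hq : q ≤ 1 / 2) (n : ℕ) :
    agreeProb κ q n ≤ 1 := by
  have : (2 : ℝ) ≤ κ := by exact_mod_cast hκ
  have h1 : 1 / (κ : ℝ) ≤ 1 := by rw [div_le_one (by linarith)]; linarith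
  have := mul_le_of_le_one_right (sub_nonneg.mpr h1) (mutEigen_pow_le_one hκ hq0 hq n)
  unfold agreeProb
  linarith

/-- The probability that a genome at distance `i` from the master sequence is mutated into it
along `n` mutation steps. -/
def masterProb (κ ℓ : ℕ) (q : ℝ) (n i : ℕ) : ℝ := agreeProb κ q n ^ (ℓ - i) * repairProb κ q n ^ i

lemma sum_Mmut_mul_masterProb (hκ : 2 ≤ κ) {i : ℕ} (hi : i ≤ ℓ) (n : ℕ) :
    ∑ j : Fin (ℓ + 1), Mmut κ ℓ q i j * masterProb κ ℓ q n j = masterProb κ ℓ q (n + 1) i := by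
  simp only [masterProb]
  rw [sum_Mmut_mul_pow_mul_pow hi, ← repairProb_succ hκ, ← agreeProb_succ hκ, mul_comm]

lemma masterProb_le_one (hκ : 2 ≤ κ) (hq0 : 0 ≤ q) (hq : q ≤ 1 / 2) (n i : ℕ) :
    masterProb κ ℓ q n i ≤ 1 := by
  have hr0 := repairProb_nonneg hκ hq0 hq n
  have hra := repairProb_le_agreeProb hκ hq n
  have ha1 := agreeProb_le_one hκ hq0 hq n
  exact mul_le_one₀ (pow_le_one₀ (hr0.trans hra) ha1) (pow_nonneg hr0 _)
    (pow_le_one₀ hr0 (hra.trans ha1))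

lemma repairProb_pow_le_masterProb (hκ : 2 ≤ κ) (hq0 : 0 ≤ q) (hq : q ≤ 1 / 2) (n : ℕ)
    {i : ℕ} (hi : i ≤ ℓ) : repairProb κ q n ^ ℓ ≤ masterProb κ ℓ q n i := by
  rw [masterProb, ← Nat.sub_add_cancel hi, pow_add, Nat.sub_add_cancel hi]
  have hr0 := repairProb_nonneg hκ hq0 hq n
  exact mul_le_mul_of_nonneg_right
    (pow_le_pow_left₀ hr0 (repairProb_le_agreeProb hκ hq n) _) (pow_nonneg hr0 _)

/-- The law of one individual of the next generation of the population `d`: a uniformly chosen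
parent, mutated. -/
def offspringLaw (κ : ℕ) (q : ℝ) (d : Fin m → Fin (ℓ + 1)) (v : Fin (ℓ + 1)) : ℝ :=
  1 / m * ∑ j, Mmut κ ℓ q (d j) v

def neutralKernel (κ : ℕ) (q : ℝ) (d e : Fin m → Fin (ℓ + 1)) : ℝ :=
  ∏ i, offspringLaw κ q d (e i)

lemma offspringLaw_nonneg (hκ : 2 ≤ κ) (hq0 : 0 ≤ q) (hq1 : q ≤ 1) (d : Fin m → Fin (ℓ + 1))
    (v : Fin (ℓ + 1)) : 0 ≤ offspringLaw κ q d v :=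
  mul_nonneg (by positivity) (sum_nonneg fun j _ => Mmut_nonneg hκ hq0 hq1 _ _)

lemma sum_offspringLaw (hm : m ≠ 0) (d : Fin m → Fin (ℓ + 1)) :
    ∑ v, offspringLaw κ q d v = 1 := by
  simp only [offspringLaw, ← mul_sum]
  rw [sum_comm]
  simp only [fun j => sum_Mmut (κ := κ) (q := q) (d j).is_le]
  simp [hm]

lemma neutralKernel_nonneg (hκ : 2 ≤ κ) (hq0 : 0 ≤ q) (hq1 : q ≤ 1)
    (d e : Fin m → Fin (ℓ + 1)) : 0 ≤ neutralKernel κ q d e :=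
  prod_nonneg fun i _ => offspringLaw_nonneg hκ hq0 hq1 d (e i)

lemma sum_neutralKernel (d : Fin m → Fin (ℓ + 1)) : ∑ e, neutralKernel κ q d e = 1 := by
  simp only [neutralKernel]
  rw [← Fintype.prod_sum]
  exact prod_eq_one fun i _ => sum_offspringLaw (Fin.pos i).ne' d

lemma sum_neutralKernel_mul_apply (d : Fin m → Fin (ℓ + 1)) (i : Fin m) (F : Fin (ℓ + 1) → ℝ) :
    ∑ e, neutralKernel κ q d e * F (e i) = ∑ v, offspringLaw κ q d v * F v := by
  have hsplit : ∀ e : Fin m → Fin (ℓ + 1), neutralKernel κ q d e * F (e i) =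
      ∏ j, offspringLaw κ q d (e j) * if j = i then F (e j) else 1 := by
    intro e
    rw [prod_mul_distrib, prod_ite_eq' univ i]
    simp [neutralKernel]
  simp only [hsplit]
  rw [← Fintype.prod_sum fun j v => offspringLaw κ q d v * if j = i then F v else 1,
    prod_eq_single i]
  · simp
  · intro j _ hj
    simpa [hj] using sum_offspringLaw (Fin.pos i).ne' d
  · simp

def meanMasterProb (κ : ℕ) (q : ℝ) (n : ℕ) (d : Fin m → Fin (ℓ + 1)) : ℝ :=
  1 / m * ∑ j, masterProb κ ℓ q n (d j)

lemma meanMasterProb_le_one (hκ : 2 ≤ κ) (hq0 : 0 ≤ q) (hq : q ≤ 1 / 2) (n : ℕ)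
    (d : Fin m → Fin (ℓ + 1)) : meanMasterProb κ q n d ≤ 1 := by
  rcases m.eq_zero_or_pos with rfl | hm
  · simp [meanMasterProb]
  calc meanMasterProb κ q n d ≤ 1 / m * ∑ _j : Fin m, (1 : ℝ) :=
        mul_le_mul_of_nonneg_left (sum_le_sum fun j _ => masterProb_le_one hκ hq0 hq n _)
          (by positivity)
    _ = 1 := by simp [hm.ne']

lemma repairProb_pow_le_meanMasterProb (hκ : 2 ≤ κ) (hq0 : 0 ≤ q) (hq : q ≤ 1 / 2) (hm : m ≠ 0)
    (n : ℕ) (d : Fin m → Fin (ℓ + 1)) : repairProb κ q n ^ ℓ ≤ meanMasterProb κ q n d := by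
  calc repairProb κ q n ^ ℓ = 1 / m * ∑ _j : Fin m, repairProb κ q n ^ ℓ := by simp [hm]
    _ ≤ meanMasterProb κ q n d :=
        mul_le_mul_of_nonneg_left
          (sum_le_sum fun j _ => repairProb_pow_le_masterProb hκ hq0 hq n (d j).is_le)
          (by positivity)

lemma sum_offspringLaw_mul_masterProb (hκ : 2 ≤ κ) (d : Fin m → Fin (ℓ + 1)) (n : ℕ) :
    ∑ v, offspringLaw κ q d v * masterProb κ ℓ q n v = meanMasterProb κ q (n + 1) d := by
  simp only [meanMasterProb, offspringLaw, ← sum_Mmut_mul_masterProb hκ (d _).is_le, mul_assoc,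
    sum_mul, ← mul_sum]
  rw [sum_comm]

/-- The mean master probability is harmonic for the neutral kernel: choosing a parent and
mutating is one more mutation step along a lineage. -/
lemma sum_neutralKernel_mul_meanMasterProb (hκ : 2 ≤ κ) (d : Fin m → Fin (ℓ + 1)) (n : ℕ) :
    ∑ e, neutralKernel κ q d e * meanMasterProb κ q n e = meanMasterProb κ q (n + 1) d := by
  rcases m.eq_zero_or_pos with rfl | hm
  · simp [meanMasterProb]
  simp only [meanMasterProb, mul_sum, mul_left_comm _ (1 / (m : ℝ))]
  rw [sum_comm]
  simp only [← mul_sum, sum_neutralKernel_mul_apply d _ (fun v => masterProb κ ℓ q n v),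
    sum_offspringLaw_mul_masterProb hκ]
  simp [meanMasterProb, hm.ne']

section Survival

variable {S : Set (Fin m → Fin (ℓ + 1))}

lemma stayD_succ (n : ℕ) (d : Fin m → Fin (ℓ + 1)) :
    stayD κ ℓ m q S (n + 1) d =
      if d ∈ S then ∑ e, neutralKernel κ q d e * stayD κ ℓ m q S n e else 0 :=
  rfl

lemma stayD_eq_zero_of_notMem {d : Fin m → Fin (ℓ + 1)} (hd : d ∉ S) (n : ℕ) :
    stayD κ ℓ m q S n d = 0 := by
  cases n <;> simp [stayD, hd]

lemma stayD_nonneg (hκ : 2 ≤ κ) (hq0 : 0 ≤ q) (hq1 : q ≤ 1) (n : ℕ) (d : Fin m → Fin (ℓ + 1)) :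
    0 ≤ stayD κ ℓ m q S n d := by
  induction n generalizing d with
  | zero => unfold stayD; split_ifs <;> norm_num
  | succ n ih =>
    rw [stayD_succ]
    split_ifs
    · exact sum_nonneg fun e _ => mul_nonneg (neutralKernel_nonneg hκ hq0 hq1 d e) (ih e)
    · rfl

lemma stayD_le_one (hκ : 2 ≤ κ) (hq0 : 0 ≤ q) (hq1 : q ≤ 1) (n : ℕ) (d : Fin m → Fin (ℓ + 1)) :
    stayD κ ℓ m q S n d ≤ 1 := by
  induction n generalizing d with
  | zero => unfold stayD; split_ifs <;> norm_num
  | succ n ih =>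
    rw [stayD_succ]
    split_ifs
    · calc ∑ e, neutralKernel κ q d e * stayD κ ℓ m q S n e ≤ ∑ e, neutralKernel κ q d e * 1 :=
            sum_le_sum fun e _ =>
              mul_le_mul_of_nonneg_left (ih e) (neutralKernel_nonneg hκ hq0 hq1 d e)
        _ = 1 := by simp only [mul_one, sum_neutralKernel]
    · norm_num

lemma stayD_add_le (hκ : 2 ≤ κ) (hq0 : 0 ≤ q) (hq1 : q ≤ 1) {s : ℕ} {B : ℝ}
    (hB : ∀ e, stayD κ ℓ m q S s e ≤ B) (n : ℕ) (d : Fin m → Fin (ℓ + 1)) :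
    stayD κ ℓ m q S (n + s) d ≤ stayD κ ℓ m q S n d * B := by
  by_cases hd : d ∈ S
  · induction n generalizing d with
    | zero => simpa [stayD, hd] using hB d
    | succ n ih =>
      rw [Nat.add_right_comm, stayD_succ, stayD_succ, if_pos hd, if_pos hd, sum_mul]
      refine sum_le_sum fun e _ => ?_
      rw [mul_assoc]
      refine mul_le_mul_of_nonneg_left ?_ (neutralKernel_nonneg hκ hq0 hq1 d e)
      by_cases he : e ∈ S
      · exact ih e he
      · simp [stayD_eq_zero_of_notMem he]
  · simp [stayD_eq_zero_of_notMem hd]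

lemma stayD_add_mul_le_pow (hκ : 2 ≤ κ) (hq0 : 0 ≤ q) (hq1 : q ≤ 1) {s : ℕ} {B : ℝ}
    (hB0 : 0 ≤ B) (hB : ∀ e, stayD κ ℓ m q S s e ≤ B) (n j : ℕ) (d : Fin m → Fin (ℓ + 1)) :
    stayD κ ℓ m q S (n + s * j) d ≤ B ^ j := by
  induction j generalizing d with
  | zero => simpa using stayD_le_one hκ hq0 hq1 n d
  | succ j ih =>
    rw [mul_add_one, ← add_assoc, pow_succ]
    exact (stayD_add_le hκ hq0 hq1 hB _ d).trans (mul_le_mul_of_nonneg_right (ih d) hB0)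

/-- Survival is at most `(1 - γ)^⌊n / T⌋` after `n` steps. -/
lemma tsum_stayD_le (hκ : 2 ≤ κ) (hq0 : 0 ≤ q) (hq1 : q ≤ 1) {T : ℕ} (hT : T ≠ 0) {γ : ℝ}
    (hγ : 0 < γ) (hS : ∀ e, stayD κ ℓ m q S T e ≤ 1 - γ) (d : Fin m → Fin (ℓ + 1)) :
    ∑' n, stayD κ ℓ m q S n d ≤ T / γ := by
  have hc0 : 0 ≤ 1 - γ := (stayD_nonneg hκ hq0 hq1 T d).trans (hS d)
  have hblocks : ∀ N, ∑ n ∈ range (N * T), stayD κ ℓ m q S n d ≤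
      T * ∑ j ∈ range N, (1 - γ) ^ j := by
    intro N
    induction N with
    | zero => simp
    | succ N ih =>
      rw [add_one_mul, sum_range_add, sum_range_succ, mul_add]
      refine add_le_add ih ?_
      calc ∑ r ∈ range T, stayD κ ℓ m q S (N * T + r) d ≤ ∑ r ∈ range T, (1 - γ) ^ N :=
            sum_le_sum fun r _ => by
              rw [add_comm, mul_comm]
              exact stayD_add_mul_le_pow hκ hq0 hq1 hc0 hS r N d
        _ = T * (1 - γ) ^ N := by simp
  have hgeom : ∀ N, ∑ j ∈ range N, (1 - γ) ^ j ≤ 1 / γ := fun N => by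
    have := geom_sum_Ico_le_of_lt_one (m := 0) (n := N) hc0 (by linarith)
    rwa [← Finset.range_eq_Ico, pow_zero, sub_sub_cancel] at this
  have hpartial : ∀ N, ∑ n ∈ range N, stayD κ ℓ m q S n d ≤ T / γ := fun N =>
    calc ∑ n ∈ range N, stayD κ ℓ m q S n d ≤ ∑ n ∈ range (N * T), stayD κ ℓ m q S n d :=
          sum_le_sum_of_subset_of_nonneg
            (range_subset_range.mpr (Nat.le_mul_of_pos_right N (Nat.pos_of_ne_zero hT)))
            fun n _ _ => stayD_nonneg hκ hq0 hq1 n d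
      _ ≤ T * (1 / γ) := (hblocks N).trans (mul_le_mul_of_nonneg_left (hgeom N) T.cast_nonneg)
      _ = T / γ := by ring
  exact Real.tsum_le_of_sum_range_le (fun n => stayD_nonneg hκ hq0 hq1 n d) hpartial

/-- Every lineage of a population that stays in `S` avoids the master sequence, so surviving
`n` steps is at most the probability that a uniformly chosen lineage misses it. -/
lemma stayD_le_one_sub_meanMasterProb (hκ : 2 ≤ κ) (hq0 : 0 ≤ q) (hq : q ≤ 1 / 2)
    (hS : ∀ e ∈ S, ∀ i, (e i : ℕ) ≠ 0) (n : ℕ) (d : Fin m → Fin (ℓ + 1)) :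
    stayD κ ℓ m q S n d ≤ 1 - meanMasterProb κ q n d := by
  have hq1 : q ≤ 1 := by linarith
  by_cases hd : d ∈ S
  swap
  · rw [stayD_eq_zero_of_notMem hd]
    linarith [meanMasterProb_le_one hκ hq0 hq n d]
  induction n generalizing d with
  | zero =>
    have : meanMasterProb κ q 0 d = 0 := by
      simp [meanMasterProb, masterProb, repairProb, hS d hd]
    simp [stayD, hd, this]
  | succ n ih =>
    rw [stayD_succ, if_pos hd, ← sum_neutralKernel_mul_meanMasterProb hκ]
    calc ∑ e, neutralKernel κ q d e * stayD κ ℓ m q S n e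
        ≤ ∑ e, neutralKernel κ q d e * (1 - meanMasterProb κ q n e) := by
          refine sum_le_sum fun e _ => mul_le_mul_of_nonneg_left ?_
            (neutralKernel_nonneg hκ hq0 hq1 d e)
          by_cases he : e ∈ S
          · exact ih e he
          · rw [stayD_eq_zero_of_notMem he]
            linarith [meanMasterProb_le_one hκ hq0 hq n e]
      _ = 1 - ∑ e, neutralKernel κ q d e * meanMasterProb κ q n e := by
          simp only [mul_sub, mul_one, sum_sub_distrib, sum_neutralKernel]

lemma tsum_stayD_le_div_repairProb_pow (hκ : 2 ≤ κ) (hq0 : 0 < q) (hq : q ≤ 1 / 2)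
    (hm : m ≠ 0) (hS : ∀ e ∈ S, ∀ i, (e i : ℕ) ≠ 0) {T : ℕ} (hT : T ≠ 0)
    (d : Fin m → Fin (ℓ + 1)) :
    ∑' n, stayD κ ℓ m q S n d ≤ T / repairProb κ q T ^ ℓ :=
  tsum_stayD_le hκ hq0.le (by linarith) hT (pow_pos (repairProb_pos hκ hq0 hq hT) ℓ)
    (fun e => (stayD_le_one_sub_meanMasterProb hκ hq0.le hq hS T e).trans
      (sub_le_sub_left (repairProb_pow_le_meanMasterProb hκ hq0.le hq hm T e) 1)) d

end Survival

lemma mutEigen_pow_le_exp (hκ : 2 ≤ κ) (hq0 : 0 ≤ q) (hq : q ≤ 1 / 2) (n : ℕ) :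
    mutEigen κ q ^ n ≤ Real.exp (-(q * n)) := by
  rw [show -(q * n) = n * -q by ring, Real.exp_nat_mul]
  exact pow_le_pow_left₀ (mutEigen_nonneg hκ hq)
    ((mutEigen_le hκ hq0).trans (Real.one_sub_le_exp_neg q)) n

/-- With at least `b` mutations per genome and generation, `C ℓ` generations bring each site
within `1 - ρ` of equilibrium, uniformly in the genome length `ℓ`. -/
lemma exists_mutEigen_pow_mul_le (hκ : 2 ≤ κ) {b ρ : ℝ} (hb : 0 < b) (hρ : ρ < 1) :
    ∃ C : ℕ, C ≠ 0 ∧ ∀ (ℓ : ℕ) (q : ℝ), 0 ≤ q → q ≤ 1 / 2 → b ≤ q * ℓ →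
      mutEigen κ q ^ (ℓ * C) ≤ 1 - ρ := by
  have hexp : Real.exp (-b) < 1 := Real.exp_lt_one_iff.mpr (by linarith)
  obtain ⟨C, hC, hC0⟩ :=
    (((tendsto_pow_atTop_nhds_zero_of_lt_one (Real.exp_pos _).le hexp).eventually
      (ge_mem_nhds (sub_pos.mpr hρ))).and (eventually_ne_atTop 0)).exists
  refine ⟨C, hC0, fun ℓ q hq0 hq hbq => ?_⟩
  calc mutEigen κ q ^ (ℓ * C) ≤ Real.exp (-(q * ℓ)) ^ C := by
        rw [pow_mul]
        exact pow_le_pow_left₀ (pow_nonneg (mutEigen_nonneg hκ hq) ℓ)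
          (mutEigen_pow_le_exp hκ hq0 hq ℓ) C
    _ ≤ Real.exp (-b) ^ C := by gcongr
    _ ≤ 1 - ρ := hC

lemma eventually_mul_le_pow {r : ℝ} (hr : 1 < r) (C : ℕ) :
    ∀ᶠ n : ℕ in atTop, (n * C : ℝ) ≤ r ^ n := by
  have hC : (0 : ℝ) < C + 1 := by positivity
  filter_upwards [(tendsto_pow_const_div_const_pow_of_one_lt 1 hr).eventually
    (ge_mem_nhds (inv_pos.mpr hC))] with n hn
  have hrn : 0 < r ^ n := pow_pos (by linarith) n
  rw [pow_one, div_le_iff₀ hrn, le_inv_mul_iff₀ hC] at hn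
  nlinarith [n.cast_nonneg (α := ℝ)]

lemma le_repairProb_of_mutEigen_pow_le {ρ : ℝ} {n : ℕ} (h : mutEigen κ q ^ n ≤ 1 - ρ) :
    ρ / κ ≤ repairProb κ q n :=
  div_le_div_of_nonneg_right (by linarith) κ.cast_nonneg

lemma tsum_stayD_le_rpow (hκ : 2 ≤ κ) (hq0 : 0 < q) (hq : q ≤ 1 / 2) (hm : m ≠ 0)
    {S : Set (Fin m → Fin (ℓ + 1))} (hS : ∀ e ∈ S, ∀ i, (e i : ℕ) ≠ 0) {T : ℕ} (hT : T ≠ 0)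
    {ε : ℝ} (hTℓ : (T : ℝ) ≤ (κ : ℝ) ^ (ε / 2 * ℓ))
    (hmix : mutEigen κ q ^ T ≤ 1 - (κ : ℝ) ^ (-(ε / 2))) (d : Fin m → Fin (ℓ + 1)) :
    ∑' n, stayD κ ℓ m q S n d ≤ (κ : ℝ) ^ (ℓ * (1 + ε)) := by
  have hκ0 : (0 : ℝ) < κ := by positivity
  have hrepair : (κ : ℝ) ^ (-(1 + ε / 2)) ≤ repairProb κ q T := by
    rw [neg_add, Real.rpow_add hκ0, Real.rpow_neg_one, mul_comm, ← div_eq_mul_inv]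
    exact le_repairProb_of_mutEigen_pow_le hmix
  calc ∑' n, stayD κ ℓ m q S n d ≤ T / repairProb κ q T ^ ℓ :=
        tsum_stayD_le_div_repairProb_pow hκ hq0 hq hm hS hT d
    _ ≤ (κ : ℝ) ^ (ε / 2 * ℓ) / ((κ : ℝ) ^ (-(1 + ε / 2))) ^ ℓ := by
        gcongr
    _ = (κ : ℝ) ^ (ℓ * (1 + ε)) := by
        rw [← Real.rpow_mul_natCast hκ0.le, ← Real.rpow_sub hκ0]
        ring_nf

theorem discovery_time_upper_general (κ : ℕ) (hκ : 2 ≤ κ) (a α : ℝ) (ha : 0 < a)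
    (k : ℕ) (ε : ℝ) (hε : 0 < ε) :
    Asympα a α (fun ℓ m q =>
      ∀ d : Fin m → Fin (ℓ + 1), (∀ i, k < (d i : ℕ)) →
        (∑' n : ℕ, stayD κ ℓ m q {e | ∀ i, k < (e i : ℕ)} n d) ≤
          (κ : ℝ) ^ ((ℓ : ℝ) * (1 + ε))) := by
  have hκ1 : (1 : ℝ) < κ := by exact_mod_cast hκ
  obtain ⟨C, hC0, hmix⟩ := exists_mutEigen_pow_mul_le hκ (half_pos ha)
    (Real.rpow_lt_one_of_one_lt_of_neg hκ1 (by linarith : -(ε / 2) < 0))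
  obtain ⟨N, hN⟩ := eventually_atTop.mp
    ((eventually_mul_le_pow (Real.one_lt_rpow hκ1 (half_pos hε)) C).and (eventually_ne_atTop 0))
  refine ⟨min (a / 2) (1 / 2), by positivity, max N 1, fun ℓ m q hℓ hm hq0 hq haq _ d _ => ?_⟩
  have hq2 : q ≤ 1 / 2 := hq.le.trans (min_le_right _ _)
  have hqℓ : a / 2 ≤ q * ℓ := by
    have := abs_lt.mp (haq.trans_le (min_le_left _ _))
    linarith
  obtain ⟨hℓC, hℓ0⟩ := hN ℓ (le_of_max_le_left hℓ)
  refine tsum_stayD_le_rpow hκ hq0 hq2 (by omega)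
    (fun e (he : ∀ i, k < (e i : ℕ)) i => Nat.ne_zero_of_lt (he i))
    (mul_ne_zero hℓ0 hC0) ?_ (hmix ℓ q hq0.le hq2 hqℓ) d
  rw [Real.rpow_mul_natCast (by positivity)]
  exact_mod_cast hℓC

/-- **Upper bound for the discovery time (neutral phase).**
Asymptotically, for any `k ≥ 0`, `ε > 0` and `d ∈ 𝒩_k`:
`E(τ*_k | D_0 = d) ≤ κ^{ℓ(1+ε)}`, where
`E(τ*_k | D_0 = d) = Σ_{n ≥ 0} P(τ*_k > n | D_0 = d)`. -/
theorem discovery_time_upper (κ : ℕ) (hκ : 2 ≤ κ) (a α : ℝ) (ha : 0 < a) (hα : 0 < α)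
    (k : ℕ) (ε : ℝ) (hε : 0 < ε) :
    Asympα a α (fun ℓ m q =>
      ∀ d : Fin m → Fin (ℓ + 1), (∀ i, k < (d i : ℕ)) →
        (∑' n : ℕ, stayD κ ℓ m q {e | ∀ i, k < (e i : ℕ)} n d) ≤
          (κ : ℝ) ^ ((ℓ : ℝ) * (1 + ε))) :=
  discovery_time_upper_general κ hκ a α ha k ε hε
end
end
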